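/- arXiv:1710.10727 — 6 statements merged into one kernel-verified Lean document; each statement's English description precedes it below -/
import Mathlib

section
/- In a tree with positive edge weights and additive path distance d, for leaves a and b with Φ_abc = d(a,c) − d(b,c): the value Φ_abc is the same for all c ∉ {a,b} and satisfies −d(a,b) < Φ_abc < d(a,b) if and only if a and b are distinct leaves sharing the same neighbor (siblings with a common parent). -/
/-!
A leaf `a` with neighbour `x` reaches every other vertex through `x`, so
`d a c = d a x + d x c` for `c ≠ a`. If `a` and `b` hang off a common vertex `h`, this gives
`d a c - d b c = d a h - d b h` for every `c ∉ {a, b}`, strictly between `-d a b` and `d a b`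
because `d a b = d a h + d h b` with both terms positive. Conversely, let `x`, `y` be the
neighbours of `a`, `b`. If `x = b` then `d a c - d b c = d a b` for all `c ∉ {a, b}`, violating
the strict bound, and symmetrically `y ≠ a`. Equating the values at `c = x` and `c = y` then
gives `d x y + d y x = 0`, forcing `x = y`.
-/

namespace SimpleGraph

variable {V : Type*} {G : SimpleGraph V} {a b : V}

lemma Walk.IsPath.notMem_support_of_degree_eq_one [Fintype (G.neighborSet a)] {u c : V}
    {p : G.Walk u c} (hp : p.IsPath) (ha : G.degree a = 1) (hu : u ≠ a) (hc : c ≠ a) :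
    a ∉ p.support := by
  induction p with
  | nil => simpa using hu.symm
  | @cons u x c hux p ih =>
    rw [Walk.support_cons, List.mem_cons, not_or]
    refine ⟨Ne.symm hu, ?_⟩
    obtain rfl | hxa := eq_or_ne x a
    · cases p with
      | nil => exact absurd rfl hc
      | cons hxy q =>
        -- the leaf `a` would be adjacent to both `u` and the vertex after it on the path
        obtain ⟨y, -, huniq⟩ := degree_eq_one_iff_existsUnique_adj.mp ha
        obtain rfl : u = _ := (huniq _ hux.symm).trans (huniq _ hxy).symm
        simp at hp
    · exact ih hp.of_cons hxa hc

def IsPathWeightDist (G : SimpleGraph V) (w : Sym2 V → ℝ) (d : V → V → ℝ) : Prop :=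
  ∀ (a b : V) (p : G.Walk a b), p.IsPath → d a b = (p.edges.map w).sum

namespace IsPathWeightDist

variable {w : Sym2 V → ℝ} {d : V → V → ℝ} (hd : G.IsPathWeightDist w d)
include hd

lemma apply_self (x : V) : d x x = 0 := by
  simpa using hd x x .nil .nil

lemma apply_of_adj {x y : V} (hxy : G.Adj x y) : d x y = w s(x, y) := by
  simpa using hd x y (.cons hxy .nil) (by simpa using hxy.ne)

lemma symm (hG : G.Preconnected) (x y : V) : d x y = d y x := by
  obtain ⟨p, hp⟩ := (hG x y).exists_isPath
  rw [hd x y p hp, hd y x p.reverse hp.reverse, Walk.edges_reverse, List.map_reverse,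
    List.sum_reverse]

lemma pos (hG : G.Preconnected) (hw : ∀ e ∈ G.edgeSet, 0 < w e) {x y : V} (hxy : x ≠ y) :
    0 < d x y := by
  obtain ⟨p, hp⟩ := (hG x y).exists_isPath
  rw [hd x y p hp]
  refine List.sum_pos _ (by simpa using fun e he ↦ hw e (p.edges_subset_edgeSet he)) ?_
  simpa [Walk.edges_eq_nil] using fun h : p.Nil ↦ hxy h.eq

lemma eq_add_of_degree_eq_one [Fintype (G.neighborSet a)] (hG : G.Preconnected)
    (ha : G.degree a = 1) {x c : V} (hax : G.Adj a x) (hc : c ≠ a) :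
    d a c = d a x + d x c := by
  obtain ⟨p, hp⟩ := (hG x c).exists_isPath
  have hap : (Walk.cons hax p).IsPath :=
    hp.cons (hp.notMem_support_of_degree_eq_one ha hax.ne' hc)
  rw [hd a c _ hap, hd.apply_of_adj hax, hd x c p hp, Walk.edges_cons, List.map_cons,
    List.sum_cons]

variable [Fintype (G.neighborSet a)] [Fintype (G.neighborSet b)] (hG : G.Preconnected)
  (ha : G.degree a = 1) (hb : G.degree b = 1)
include hG ha hb

lemma sub_eq_of_adj_of_adj {h c : V} (hah : G.Adj a h) (hbh : G.Adj b h) (hca : c ≠ a)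
    (hcb : c ≠ b) : d a c - d b c = d a h - d b h := by
  rw [hd.eq_add_of_degree_eq_one hG ha hah hca, hd.eq_add_of_degree_eq_one hG hb hbh hcb]
  ring

lemma exists_adj_adj_of_sub_eq (hw : ∀ e ∈ G.edgeSet, 0 < w e) {c₀ : V} (hc₀a : c₀ ≠ a)
    (hc₀b : c₀ ≠ b)
    (hconst : ∀ c c' : V, c ≠ a → c ≠ b → c' ≠ a → c' ≠ b → d a c - d b c = d a c' - d b c')
    (hbound : ∀ c : V, c ≠ a → c ≠ b → -(d a b) < d a c - d b c ∧ d a c - d b c < d a b) :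
    ∃ h : V, G.Adj a h ∧ G.Adj b h := by
  obtain ⟨x, hax, -⟩ := degree_eq_one_iff_existsUnique_adj.mp ha
  obtain ⟨y, hby, -⟩ := degree_eq_one_iff_existsUnique_adj.mp hb
  have hxb : x ≠ b := by
    rintro rfl
    linarith [(hbound c₀ hc₀a hc₀b).2, hd.eq_add_of_degree_eq_one hG ha hax hc₀a]
  have hya : y ≠ a := by
    rintro rfl
    linarith [(hbound c₀ hc₀a hc₀b).1, hd.eq_add_of_degree_eq_one hG hb hby hc₀b, hd.symm hG b y]
  have hxy : x = y := by
    by_contra hne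
    linarith [hconst x y hax.ne' hxb hya hby.ne', hd.eq_add_of_degree_eq_one hG hb hby hxb, hd.eq_add_of_degree_eq_one hG ha hax hya,
      hd.pos hG hw hne, hd.pos hG hw (Ne.symm hne)]
  exact ⟨x, hax, hxy ▸ hby⟩

end IsPathWeightDist

end SimpleGraph

theorem stmt1_general {V : Type*} [Fintype V]
    (G : SimpleGraph V) [DecidableRel G.Adj] (hT : G.IsTree)
    (hV : 3 ≤ Fintype.card V)
    (w : Sym2 V → ℝ) (hw : ∀ e ∈ G.edgeSet, 0 < w e)
    (d : V → V → ℝ)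
    (hd : ∀ (a b : V) (p : G.Walk a b), p.IsPath → d a b = (p.edges.map w).sum)
    (a b : V) (ha : G.degree a = 1) (hb : G.degree b = 1) :
    ((∀ c c' : V, c ≠ a → c ≠ b → c' ≠ a → c' ≠ b →
        d a c - d b c = d a c' - d b c') ∧
      (∀ c : V, c ≠ a → c ≠ b →
        -(d a b) < d a c - d b c ∧ d a c - d b c < d a b)) ↔
      (a ≠ b ∧ ∃ h : V, G.Adj a h ∧ G.Adj b h) := by
  have hd : G.IsPathWeightDist w d := hd
  have hG := hT.connected.preconnected
  obtain ⟨c₀, hc₀a, hc₀b⟩ :=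
    ENat.exists_ne_ne_of_three_le (by simpa [ENat.card_eq_coe_fintype_card] using hV) a b
  constructor
  · rintro ⟨hconst, hbound⟩
    refine ⟨?_, hd.exists_adj_adj_of_sub_eq hG ha hb hw hc₀a hc₀b hconst hbound⟩
    rintro rfl
    linarith [hbound c₀ hc₀a hc₀b, hd.apply_self a]
  · rintro ⟨hab, h, hah, hbh⟩
    have hsub {c} := hd.sub_eq_of_adj_of_adj hG ha hb hah hbh (c := c)
    have hdab : d a b = d a h + d b h := by
      rw [hd.eq_add_of_degree_eq_one hG ha hah hab.symm, hd.symm hG h b]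
    refine ⟨fun c c' hca hcb hc'a hc'b ↦ by rw [hsub hca hcb, hsub hc'a hc'b],
      fun c hca hcb ↦ ?_⟩
    have := hd.pos hG hw hah.ne
    have := hd.pos hG hw hbh.ne
    rw [hsub hca hcb, hdab]
    constructor <;> linarith

/-- For leaves `a`, `b` of a positively weighted tree, `Φ_abc = d a c - d b c`
is constant over `c ∉ {a,b}` and lies strictly between `-d a b` and `d a b`
iff `a`, `b` are distinct leaves with a common parent (siblings). -/
theorem stmt1 {V : Type*} [Fintype V] [DecidableEq V]
    (G : SimpleGraph V) [DecidableRel G.Adj] (hT : G.IsTree)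
    (hV : 3 ≤ Fintype.card V)
    (w : Sym2 V → ℝ) (hw : ∀ e ∈ G.edgeSet, 0 < w e)
    (d : V → V → ℝ)
    (hd : ∀ (a b : V) (p : G.Walk a b), p.IsPath → d a b = (p.edges.map w).sum)
    (a b : V) (ha : G.degree a = 1) (hb : G.degree b = 1) :
    ((∀ c c' : V, c ≠ a → c ≠ b → c' ≠ a → c' ≠ b →
        d a c - d b c = d a c' - d b c') ∧
      (∀ c : V, c ≠ a → c ≠ b →
        -(d a b) < d a c - d b c ∧ d a c - d b c < d a b)) ↔
      (a ≠ b ∧ ∃ h : V, G.Adj a h ∧ G.Adj b h) :=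
  stmt1_general G hT hV w hw d hd a b ha hb
end

section
/- Let H be the reduced weighted graph Laplacian of a tree T with root t, using edge weights 1/r_e (removing the row and column of t). Then for any non-root nodes a, b, the entry H⁻¹(a,b) equals the sum of r_e over all edges e lying on both the path from a to t and the path from b to t. -/
/-!
The inverse is the matrix `M b c` summing `r` over the edges shared by the root paths of `b`
and `c`. For a neighbour `w` of `a` these root paths differ by the edge `aw` alone, so
`M a c - M w c = ±r_{aw}` when `aw` lies on the root path of `c` (and `0` otherwise), the sign
recording whether `aw` points towards the root. Hence `(L M) a c` is the net outflow at `a` of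
the root path of `c` oriented rootwards, which is `δ_{ac}` for `a ≠ t`.
-/

open Finset

namespace Finset

lemma sum_insert_inter_of_notMem {α M : Type*} [DecidableEq α] [AddCommMonoid M] {e : α}
    {s : Finset α} (he : e ∉ s) (t : Finset α) (f : α → M) :
    ∑ x ∈ insert e s ∩ t, f x = (if e ∈ t then f e else 0) + ∑ x ∈ s ∩ t, f x := by
  rw [← sum_ite_mem, sum_insert he, sum_ite_mem]

end Finset

namespace SimpleGraph

variable {V : Type*} {G : SimpleGraph V}

section Laplacian

variable [Fintype V] [DecidableEq V] [DecidableRel G.Adj]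

lemma sum_neighborFinset_ite_mk_eq {M : Type*} [AddCommMonoid M] {c d : V} (hcd : G.Adj c d)
    (φ : V → V → M) (a : V) :
    ∑ w ∈ G.neighborFinset a, (if s(a, w) = s(c, d) then φ a w else 0) =
      (if a = c then φ c d else 0) + (if a = d then φ d c else 0) := by
  by_cases hac : a = c
  · subst hac
    simp [hcd, hcd.ne]
  by_cases had : a = d
  · subst had
    simp_rw [Sym2.eq_swap (a := c), Sym2.congr_right]
    simp [hac, hcd.symm]
  · simp [hac, had]

lemma sum_mul_eq_sum_neighborFinset_mul_sub {R : Type*} [CommRing R] (κ : Sym2 V → R)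
    (L : Matrix V V R)
    (hL : ∀ a b : V, L a b =
      if a = b then ∑ c ∈ G.neighborFinset a, κ s(a, c)
      else if G.Adj a b then -κ s(a, b) else 0)
    (f : V → R) (a : V) :
    ∑ b, L a b * f b = ∑ w ∈ G.neighborFinset a, κ s(a, w) * (f a - f w) := by
  have hsplit : ∀ b, L a b * f b = (if a = b then (∑ c ∈ G.neighborFinset a, κ s(a, c)) * f b
      else 0) + (if G.Adj a b then -κ s(a, b) * f b else 0) := by
    intro b
    rw [hL]
    by_cases hab : a = b
    · subst hab
      simp
    · simp [hab]
  simp_rw [hsplit, sum_add_distrib, sum_ite_eq, mem_univ, if_true, ← sum_filter,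
    ← neighborFinset_eq_filter, mul_sub, sum_sub_distrib, sum_mul, neg_mul, sum_neg_distrib,
    sub_eq_add_neg]

end Laplacian

namespace IsTree

variable (hT : G.IsTree) (t : V)

noncomputable def pathToRoot (v : V) : G.Walk v t :=
  (hT.existsUnique_path v t).exists.choose

lemma isPath_pathToRoot (v : V) : (hT.pathToRoot t v).IsPath :=
  (hT.existsUnique_path v t).exists.choose_spec

lemma eq_pathToRoot {v : V} {p : G.Walk v t} (hp : p.IsPath) : p = hT.pathToRoot t v :=
  (hT.existsUnique_path v t).unique hp (hT.isPath_pathToRoot t v)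

lemma pathToRoot_root : hT.pathToRoot t t = .nil :=
  (hT.eq_pathToRoot t .nil).symm

lemma mk_notMem_edges_of_pathToRoot_eq_cons {a w : V} {h : G.Adj a w}
    (hP : hT.pathToRoot t a = .cons h (hT.pathToRoot t w)) :
    s(a, w) ∉ (hT.pathToRoot t w).edges := by
  have hpath := hP ▸ hT.isPath_pathToRoot t a
  rw [Walk.cons_isPath_iff] at hpath
  exact fun he => hpath.2 ((hT.pathToRoot t w).fst_mem_support_of_mem_edges he)

variable [DecidableEq V]

lemma pathToRoot_eq_cons_or {a w : V} (h : G.Adj a w) :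
    hT.pathToRoot t a = .cons h (hT.pathToRoot t w) ∨
      hT.pathToRoot t w = .cons h.symm (hT.pathToRoot t a) := by
  by_cases ha : a ∈ (hT.pathToRoot t w).support
  · right
    -- if `w` also lay on the path from `a`, each path would be a suffix of the other,
    -- yet the one from `a` is strictly shorter
    have hdrop : (hT.pathToRoot t w).dropUntil a ha = hT.pathToRoot t a :=
      hT.eq_pathToRoot t ((hT.isPath_pathToRoot t w).dropUntil ha)
    have hlt := Walk.length_dropUntil_lt_length ha h.ne
    have hw : w ∉ (hT.pathToRoot t a).support := by
      intro hw
      have hle := Walk.length_dropUntil_le_length (hT.pathToRoot t a) hw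
      rw [hT.eq_pathToRoot t ((hT.isPath_pathToRoot t a).dropUntil hw)] at hle
      rw [hdrop] at hlt
      omega
    exact (hT.eq_pathToRoot t ((hT.isPath_pathToRoot t a).cons hw)).symm
  · left
    exact (hT.eq_pathToRoot t ((hT.isPath_pathToRoot t w).cons ha)).symm

noncomputable def rootwardSign (a w : V) : ℝ :=
  if s(a, w) ∈ (hT.pathToRoot t a).edges then 1 else -1

noncomputable def sharedPathWeight (r : Sym2 V → ℝ) (a b : V) : ℝ :=
  ∑ e ∈ (hT.pathToRoot t a).edges.toFinset ∩ (hT.pathToRoot t b).edges.toFinset, r e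

lemma sharedPathWeight_root_left (r : Sym2 V → ℝ) (c : V) :
    hT.sharedPathWeight t r t c = 0 := by
  simp [sharedPathWeight, pathToRoot_root]

lemma rootwardSign_of_pathToRoot_eq_cons {a w : V} {h : G.Adj a w}
    (hP : hT.pathToRoot t a = .cons h (hT.pathToRoot t w)) :
    hT.rootwardSign t a w = 1 ∧ hT.rootwardSign t w a = -1 := by
  refine ⟨by simp [rootwardSign, hP], ?_⟩
  rw [rootwardSign, if_neg]
  rw [Sym2.eq_swap]
  exact hT.mk_notMem_edges_of_pathToRoot_eq_cons t hP

lemma sharedPathWeight_of_pathToRoot_eq_cons (r : Sym2 V → ℝ) {a w : V} {h : G.Adj a w}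
    (hP : hT.pathToRoot t a = .cons h (hT.pathToRoot t w)) (c : V) :
    hT.sharedPathWeight t r a c =
      (if s(a, w) ∈ (hT.pathToRoot t c).edges then r s(a, w) else 0) +
        hT.sharedPathWeight t r w c := by
  rw [sharedPathWeight, hP, Walk.edges_cons, List.toFinset_cons,
    sum_insert_inter_of_notMem (by simpa using hT.mk_notMem_edges_of_pathToRoot_eq_cons t hP)]
  simp only [List.mem_toFinset, sharedPathWeight]

lemma sharedPathWeight_sub_of_adj (r : Sym2 V → ℝ) {a w : V} (h : G.Adj a w) (c : V) :
    hT.sharedPathWeight t r a c - hT.sharedPathWeight t r w c =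
      hT.rootwardSign t a w *
        (if s(a, w) ∈ (hT.pathToRoot t c).edges then r s(a, w) else 0) := by
  rcases hT.pathToRoot_eq_cons_or t h with hP | hP
  · rw [hT.sharedPathWeight_of_pathToRoot_eq_cons t r hP,
      (hT.rootwardSign_of_pathToRoot_eq_cons t hP).1]
    ring
  · rw [hT.sharedPathWeight_of_pathToRoot_eq_cons t r hP,
      (hT.rootwardSign_of_pathToRoot_eq_cons t hP).2, Sym2.eq_swap]
    ring

variable [Fintype V] [DecidableRel G.Adj]

/-- A path to the root, oriented towards the root, is a unit flow from its start to the root. -/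
lemma sum_neighborFinset_rootwardSign {c : V} (q : G.Walk c t) (hq : q.IsPath) (a : V) :
    ∑ w ∈ G.neighborFinset a, (if s(a, w) ∈ q.edges then hT.rootwardSign t a w else 0) =
      (if a = c then 1 else 0) - (if a = t then 1 else 0) := by
  induction q with
  | nil => simp
  | @cons c d t h q ih =>
    rw [Walk.cons_isPath_iff] at hq
    have hPd : hT.pathToRoot t d = q := (hT.eq_pathToRoot t hq.1).symm
    have hPc : hT.pathToRoot t c = .cons h (hT.pathToRoot t d) := by
      rw [hPd]
      exact (hT.eq_pathToRoot t (hq.1.cons hq.2)).symm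
    have hcd : s(c, d) ∉ q.edges := hPd ▸ hT.mk_notMem_edges_of_pathToRoot_eq_cons t hPc
    have hsplit : ∀ w, (if s(a, w) ∈ (Walk.cons h q).edges then hT.rootwardSign t a w else 0) =
        (if s(a, w) = s(c, d) then hT.rootwardSign t a w else 0) +
          (if s(a, w) ∈ q.edges then hT.rootwardSign t a w else 0) := by
      intro w
      by_cases hw : s(a, w) = s(c, d)
      · simp [hw, hcd]
      · simp [hw]
    obtain ⟨hsign_cd, hsign_dc⟩ := hT.rootwardSign_of_pathToRoot_eq_cons t hPc
    simp_rw [hsplit, sum_add_distrib, sum_neighborFinset_ite_mk_eq h, ih hq.1, hsign_cd,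
      hsign_dc]
    split_ifs <;> ring

lemma sum_laplacian_mul_sharedPathWeight (r : Sym2 V → ℝ) (hr : ∀ e ∈ G.edgeSet, 0 < r e)
    (L : Matrix V V ℝ)
    (hL : ∀ a b : V, L a b =
      if a = b then ∑ c ∈ G.neighborFinset a, (r s(a, c))⁻¹
      else if G.Adj a b then -(r s(a, b))⁻¹ else 0)
    {a : V} (hat : a ≠ t) (c : V) :
    ∑ b, L a b * hT.sharedPathWeight t r b c = if a = c then 1 else 0 := by
  rw [sum_mul_eq_sum_neighborFinset_mul_sub (fun e => (r e)⁻¹) L hL]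
  calc _ = ∑ w ∈ G.neighborFinset a,
        (if s(a, w) ∈ (hT.pathToRoot t c).edges then hT.rootwardSign t a w else 0) := by
        refine sum_congr rfl fun w hw => ?_
        have hr0 : r s(a, w) ≠ 0 := (hr _ ((G.mem_neighborFinset a w).mp hw)).ne'
        rw [hT.sharedPathWeight_sub_of_adj t r ((G.mem_neighborFinset a w).mp hw)]
        split_ifs
        · field_simp
        · simp
    _ = _ := by
        rw [hT.sum_neighborFinset_rootwardSign t _ (hT.isPath_pathToRoot t c), if_neg hat,
          sub_zero]

end IsTree

end SimpleGraph

open SimpleGraph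

/-- For a tree with root `t` and the reduced weighted Laplacian `H` with edge
weights `1/r_e`, the entry `H⁻¹ a b` equals the sum of `r_e` over edges lying
on both the path from `a` to `t` and the path from `b` to `t`. -/
theorem stmt4 {V : Type*} [Fintype V] [DecidableEq V]
    (G : SimpleGraph V) [DecidableRel G.Adj] (hT : G.IsTree)
    (t : V) (r : Sym2 V → ℝ) (hr : ∀ e ∈ G.edgeSet, 0 < r e)
    (L : Matrix V V ℝ)
    (hL : ∀ a b : V, L a b =
      if a = b then ∑ c ∈ G.neighborFinset a, (r s(a, c))⁻¹
      else if G.Adj a b then -(r s(a, b))⁻¹ else 0)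
    (H : Matrix {v : V // v ≠ t} {v : V // v ≠ t} ℝ)
    (hH : ∀ a b : {v : V // v ≠ t}, H a b = L a.1 b.1) :
    ∀ (a b : {v : V // v ≠ t}) (p : G.Walk a.1 t) (q : G.Walk b.1 t),
      p.IsPath → q.IsPath →
      H⁻¹ a b = ∑ e ∈ p.edges.toFinset ∩ q.edges.toFinset, r e := by
  intro a b p q hp hq
  let M : Matrix {v : V // v ≠ t} {v : V // v ≠ t} ℝ := fun x y => hT.sharedPathWeight t r x y
  have hHM : H * M = 1 := by
    ext x y
    have hrow := hT.sum_laplacian_mul_sharedPathWeight t r hr L hL x.2 y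
    rw [Fintype.sum_eq_add_sum_subtype_ne _ t, hT.sharedPathWeight_root_left, mul_zero,
      zero_add] at hrow
    rw [Matrix.mul_apply, Matrix.one_apply]
    simp only [Subtype.ext_iff, hH, M]
    exact hrow
  rw [Matrix.inv_eq_right_inv hHM, hT.eq_pathToRoot t hp, hT.eq_pathToRoot t hq]
  rfl
end

section
/- Combining the two previous facts: under the linearized power flow model with uncorrelated nodal injections and E[p_b²]E[q_b²] − (E[p_b q_b])² ≠ 0, the pair (H_{1/r}⁻¹(a,b), H_{1/x}⁻¹(a,b)) is the unique solution of the 2×2 linear system with moment matrix [[E[p_b²], E[p_b q_b]], [E[p_b q_b], E[q_b²]]] and right-hand side (E[v_a p_b], E[v_a q_b]); hence it is determined by second moments of observed quantities at nodes a and b only. -/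
/-!
Expanding `v_a = ∑_c (A a c p_c + B a c q_c)` and taking second moments against `p_b` and
`q_b`, every term with `c ≠ b` vanishes because the injections are uncorrelated. What is left is
`E[v_a p_b] = E[p_b²] A a b + E[p_b q_b] B a b` and `E[v_a q_b] = E[p_b q_b] A a b + E[q_b²] B a b`,
so `(A a b, B a b)` solves the 2×2 moment system, and a nonzero determinant makes it the only solution.
-/

open MeasureTheory

theorem symm_linear_system_two_iff {P Q R x y h₁ h₂ : ℝ} (hdet : P * Q - R ^ 2 ≠ 0) :
    (P * h₁ + R * h₂ = P * x + R * y ∧ R * h₁ + Q * h₂ = R * x + Q * y) ↔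
      (h₁ = x ∧ h₂ = y) := by
  constructor
  · rintro ⟨e₁, e₂⟩
    constructor
    · exact mul_left_cancel₀ hdet (by linear_combination Q * e₁ - R * e₂)
    · exact mul_left_cancel₀ hdet (by linear_combination P * e₂ - R * e₁)
  · rintro ⟨rfl, rfl⟩
    exact ⟨rfl, rfl⟩

section SecondMoments

variable {Ω ι : Type*} [MeasurableSpace Ω] [Fintype ι] {μ : Measure Ω}
  (A B : Matrix ι ι ℝ) {p q : Ω → ι → ℝ} {w : Ω → ℝ}

theorem integral_mulVec_add_mulVec_apply_mul
    (hp : ∀ c, Integrable (fun ω => p ω c * w ω) μ)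
    (hq : ∀ c, Integrable (fun ω => q ω c * w ω) μ) (a : ι) :
    ∫ ω, (A.mulVec (p ω) + B.mulVec (q ω)) a * w ω ∂μ =
      ∑ c, (A a c * ∫ ω, p ω c * w ω ∂μ + B a c * ∫ ω, q ω c * w ω ∂μ) := by
  have hexpand : (fun ω => (A.mulVec (p ω) + B.mulVec (q ω)) a * w ω) =
      fun ω => ∑ c, (A a c * (p ω c * w ω) + B a c * (q ω c * w ω)) := by
    funext ω
    simp only [Pi.add_apply, Matrix.mulVec, dotProduct, ← Finset.sum_add_distrib,
      Finset.sum_mul]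
    exact Finset.sum_congr rfl fun c _ => by ring
  rw [hexpand, integral_finsetSum _ fun c _ => ((hp c).const_mul _).fun_add ((hq c).const_mul _)]
  refine Finset.sum_congr rfl fun c _ => ?_
  rw [integral_add ((hp c).const_mul _) ((hq c).const_mul _), integral_const_mul,
    integral_const_mul]

theorem integral_mulVec_add_mulVec_apply_mul_of_uncorrelated
    (hp : ∀ c, Integrable (fun ω => p ω c * w ω) μ)
    (hq : ∀ c, Integrable (fun ω => q ω c * w ω) μ) (a b : ι)
    (hp₀ : ∀ c, c ≠ b → ∫ ω, p ω c * w ω ∂μ = 0)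
    (hq₀ : ∀ c, c ≠ b → ∫ ω, q ω c * w ω ∂μ = 0) :
    ∫ ω, (A.mulVec (p ω) + B.mulVec (q ω)) a * w ω ∂μ =
      A a b * ∫ ω, p ω b * w ω ∂μ + B a b * ∫ ω, q ω b * w ω ∂μ := by
  rw [integral_mulVec_add_mulVec_apply_mul A B hp hq a,
    Finset.sum_eq_single b (fun c _ hc => by rw [hp₀ c hc, hq₀ c hc, mul_zero, mul_zero, add_zero])
      (fun hb => absurd (Finset.mem_univ b) hb)]

end SecondMoments

theorem stmt9_general {Ω : Type*} [MeasurableSpace Ω] (μ : Measure Ω)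
    {n : ℕ}
    (A B : Matrix (Fin n) (Fin n) ℝ)
    (p q : Ω → Fin n → ℝ)
    (hpp : ∀ a b : Fin n, Integrable (fun ω => p ω a * p ω b) μ)
    (hqq : ∀ a b : Fin n, Integrable (fun ω => q ω a * q ω b) μ)
    (hpq : ∀ a b : Fin n, Integrable (fun ω => p ω a * q ω b) μ)
    (hcross : ∀ a b : Fin n, a ≠ b →
      (∫ ω, p ω a * p ω b ∂μ) = 0 ∧ (∫ ω, q ω a * q ω b ∂μ) = 0 ∧
      (∫ ω, p ω a * q ω b ∂μ) = 0)
    (v : Ω → Fin n → ℝ)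
    (hv : ∀ ω, v ω = A.mulVec (p ω) + B.mulVec (q ω))
    (a b : Fin n)
    (hdet : (∫ ω, p ω b ^ 2 ∂μ) * (∫ ω, q ω b ^ 2 ∂μ) -
      (∫ ω, p ω b * q ω b ∂μ) ^ 2 ≠ 0) :
    ∀ h₁ h₂ : ℝ,
      ((∫ ω, p ω b ^ 2 ∂μ) * h₁ + (∫ ω, p ω b * q ω b ∂μ) * h₂ =
          (∫ ω, v ω a * p ω b ∂μ) ∧
        (∫ ω, p ω b * q ω b ∂μ) * h₁ + (∫ ω, q ω b ^ 2 ∂μ) * h₂ =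
          (∫ ω, v ω a * q ω b ∂μ)) ↔
      (h₁ = A a b ∧ h₂ = B a b) := by
  intro h₁ h₂
  have hqp (c d : Fin n) : ∫ ω, q ω c * p ω d ∂μ = ∫ ω, p ω d * q ω c ∂μ := by
    simp only [mul_comm]
  have hvp : ∫ ω, v ω a * p ω b ∂μ =
      (∫ ω, p ω b ^ 2 ∂μ) * A a b + (∫ ω, p ω b * q ω b ∂μ) * B a b := by
    simp only [hv, sq]
    rw [integral_mulVec_add_mulVec_apply_mul_of_uncorrelated A B (hpp · b)
      (fun c => by simpa only [mul_comm] using hpq b c) a b (fun c hc => (hcross c b hc).1)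
      (fun c hc => by rw [hqp]; exact (hcross b c hc.symm).2.2), hqp]
    ring
  have hvq : ∫ ω, v ω a * q ω b ∂μ =
      (∫ ω, p ω b * q ω b ∂μ) * A a b + (∫ ω, q ω b ^ 2 ∂μ) * B a b := by
    simp only [hv, sq]
    rw [integral_mulVec_add_mulVec_apply_mul_of_uncorrelated A B (hpq · b) (hqq · b) a b
      (fun c hc => (hcross c b hc).2.2) (fun c hc => (hcross c b hc).2.1)]
    ring
  rw [hvp, hvq]
  exact symm_linear_system_two_iff hdet

/-- Under the linearized power flow model with uncorrelated nodal injections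
and nondegenerate second-moment matrix at node `b`, the pair
`(A a b, B a b) = (H_{1/r}⁻¹(a,b), H_{1/x}⁻¹(a,b))` is the unique solution of
the 2×2 system with moment matrix `[[E[p_b²],E[p_b q_b]],[E[p_b q_b],E[q_b²]]]`
and right-hand side `(E[v_a p_b], E[v_a q_b])`. -/
theorem stmt9 {Ω : Type*} [MeasurableSpace Ω] (μ : Measure Ω)
    [IsProbabilityMeasure μ] {n : ℕ} (hn : 1 ≤ n)
    (A B : Matrix (Fin n) (Fin n) ℝ)
    (p q : Ω → Fin n → ℝ)
    (hpp : ∀ a b : Fin n, Integrable (fun ω => p ω a * p ω b) μ)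
    (hqq : ∀ a b : Fin n, Integrable (fun ω => q ω a * q ω b) μ)
    (hpq : ∀ a b : Fin n, Integrable (fun ω => p ω a * q ω b) μ)
    (hmeanp : ∀ a : Fin n, (∫ ω, p ω a ∂μ) = 0)
    (hmeanq : ∀ a : Fin n, (∫ ω, q ω a ∂μ) = 0)
    (hcross : ∀ a b : Fin n, a ≠ b →
      (∫ ω, p ω a * p ω b ∂μ) = 0 ∧ (∫ ω, q ω a * q ω b ∂μ) = 0 ∧
      (∫ ω, p ω a * q ω b ∂μ) = 0)
    (v : Ω → Fin n → ℝ)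
    (hv : ∀ ω, v ω = A.mulVec (p ω) + B.mulVec (q ω))
    (a b : Fin n)
    (hdet : (∫ ω, p ω b ^ 2 ∂μ) * (∫ ω, q ω b ^ 2 ∂μ) -
      (∫ ω, p ω b * q ω b ∂μ) ^ 2 ≠ 0) :
    ∀ h₁ h₂ : ℝ,
      ((∫ ω, p ω b ^ 2 ∂μ) * h₁ + (∫ ω, p ω b * q ω b ∂μ) * h₂ =
          (∫ ω, v ω a * p ω b ∂μ) ∧
        (∫ ω, p ω b * q ω b ∂μ) * h₁ + (∫ ω, q ω b ^ 2 ∂μ) * h₂ =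
          (∫ ω, v ω a * q ω b ∂μ)) ↔
      (h₁ = A a b ∧ h₂ = B a b) :=
  stmt9_general μ A B p q hpp hqq hpq hcross v hv a b hdet
end

section
/- In a tree with positive edge weights, if a and b are leaves that are NOT siblings and neither is the parent of the other, then there exist nodes c, c' ∉ {a,b} with Φ_abc ≠ Φ_abc', where Φ_abc = d(a,c) − d(b,c). -/
/-!
Along the path `a – c ⋯ c' – b` from `a` to `b`, with `r` the middle segment from `c` to `c'`,
`Φ c = w(ac) - w(bc') - |r|` and `Φ c' = w(ac) - w(bc') + |r|`, where `|r|` is the weight of `r`.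
As `a ≠ b` are neither adjacent nor have a common neighbour, the path has at least three
edges, so `r` is nonempty and `Φ c' - Φ c = 2|r| > 0`.
-/

namespace SimpleGraph.Walk

variable {V : Type*} {G : SimpleGraph V}

theorem exists_eq_cons_concat_of_not_adj {a b : V} (p : G.Walk a b) (hab : a ≠ b)
    (hnadj : ¬ G.Adj a b) (hnsib : ∀ h : V, ¬ (G.Adj a h ∧ G.Adj b h)) :
    ∃ (c c' : V) (hac : G.Adj a c) (r : G.Walk c c') (hcb : G.Adj c' b),
      ¬ r.Nil ∧ p = cons hac (r.concat hcb) := by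
  rcases p with _ | ⟨hac, _ | ⟨h, q⟩⟩
  · exact absurd rfl hab
  · exact absurd hac hnadj
  · obtain ⟨c', r, hcb, hq⟩ := exists_cons_eq_concat h q
    refine ⟨_, c', hac, r, hcb, fun hr => ?_, by rw [hq]⟩
    cases hr.eq
    exact hnsib _ ⟨hac, hcb.symm⟩

theorem sum_map_edges_pos {u v : V} (w : Sym2 V → ℝ) (hw : ∀ e ∈ G.edgeSet, 0 < w e)
    {p : G.Walk u v} (hp : ¬ p.Nil) : 0 < (p.edges.map w).sum :=
  List.sum_pos _
    (by simpa using fun e he => hw e (p.edges_subset_edgeSet he))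
    (by simpa [edges_eq_nil] using hp)

theorem sub_dist_add_two_mul_eq_of_isPath (w : Sym2 V → ℝ) (d : V → V → ℝ)
    (hd : ∀ (a b : V) (p : G.Walk a b), p.IsPath → d a b = (p.edges.map w).sum)
    {a b c c' : V} (hac : G.Adj a c) (r : G.Walk c c') (hcb : G.Adj c' b)
    (hp : (cons hac (r.concat hcb)).IsPath) :
    d a c - d b c + 2 * (r.edges.map w).sum = d a c' - d b c' := by
  have hac' : (cons hac r).IsPath := by
    rw [← concat_cons] at hp
    exact ((concat_isPath_iff hcb).mp hp).1
  have hbc : (cons hcb.symm r.reverse).IsPath := by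
    simpa using hp.of_cons.reverse
  rw [hd a c _ hac.isPath_toWalk, hd b c _ hbc, hd a c' _ hac', hd b c' _ hcb.symm.isPath_toWalk]
  simp only [Adj.toWalk, edges_cons, edges_nil, edges_reverse, List.map_cons, List.map_nil,
    List.map_reverse, List.sum_cons, List.sum_nil, List.sum_reverse, add_zero]
  ring

end SimpleGraph.Walk

open SimpleGraph

theorem stmt12_general {V : Type*}
    (G : SimpleGraph V) (hT : G.IsTree)
    (w : Sym2 V → ℝ) (hw : ∀ e ∈ G.edgeSet, 0 < w e)
    (d : V → V → ℝ)
    (hd : ∀ (a b : V) (p : G.Walk a b), p.IsPath → d a b = (p.edges.map w).sum)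
    (a b : V) (hab : a ≠ b)
    (hnadj : ¬ G.Adj a b)
    (hnsib : ∀ h : V, ¬ (G.Adj a h ∧ G.Adj b h)) :
    ∃ c c' : V, c ≠ a ∧ c ≠ b ∧ c' ≠ a ∧ c' ≠ b ∧
      d a c - d b c ≠ d a c' - d b c' := by
  obtain ⟨p, hp⟩ := hT.connected.preconnected.exists_isPath a b
  obtain ⟨c, c', hac, r, hcb, hr, rfl⟩ := p.exists_eq_cons_concat_of_not_adj hab hnadj hnsib
  have hΦ := Walk.sub_dist_add_two_mul_eq_of_isPath w d hd hac r hcb hp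
  have hpos := Walk.sum_map_edges_pos w hw hr
  refine ⟨c, c', hac.ne', ?_, ?_, hcb.ne, by linarith⟩
  · rintro rfl
    exact hnadj hac
  · rintro rfl
    exact hnadj hcb

/-- In a positively weighted tree, if distinct leaves `a`, `b` are not
adjacent and have no common neighbor, then `Φ_abc = d a c - d b c` is not
constant in `c ∉ {a,b}`. -/
theorem stmt12 {V : Type*} [Fintype V] [DecidableEq V]
    (G : SimpleGraph V) [DecidableRel G.Adj] (hT : G.IsTree)
    (hV : 4 ≤ Fintype.card V)
    (w : Sym2 V → ℝ) (hw : ∀ e ∈ G.edgeSet, 0 < w e)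
    (d : V → V → ℝ)
    (hd : ∀ (a b : V) (p : G.Walk a b), p.IsPath → d a b = (p.edges.map w).sum)
    (a b : V) (hab : a ≠ b)
    (ha : G.degree a = 1) (hb : G.degree b = 1)
    (hnadj : ¬ G.Adj a b)
    (hnsib : ∀ h : V, ¬ (G.Adj a h ∧ G.Adj b h)) :
    ∃ c c' : V, c ≠ a ∧ c ≠ b ∧ c' ≠ a ∧ c' ≠ b ∧
      d a c - d b c ≠ d a c' - d b c' :=
  stmt12_general G hT w hw d hd a b hab hnadj hnsib
end

section
/- Let T and T' be two finite trees with positive edge weights whose leaf sets are both identified with a common set L, such that every internal (non-leaf) vertex of each tree has degree at least 3. If the weighted path distances agree on all pairs of leaves, d_T(a,b) = d_{T'}(a,b) for all a,b ∈ L, then T and T' are isomorphic via a weight-preserving isomorphism fixing L. -/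
/-!
Record each vertex by its leaf profile, the vector of its distances to the leaves. Every vertex
lies on the path from any given vertex to some leaf, so the profile map is injective and the
distance of two vertices is `max_ℓ |d u ℓ - d v ℓ|`, a function of their profiles. A leaf's
profile is part of the leaf metric; an interior vertex has degree `≥ 3`, so it is the median of
three leaves, and the distance from a median to any vertex `z` is the largest of the three Gromov
products at `z`, again leaf data. Hence both trees realise the same set of profiles, giving a
distance-preserving bijection. Adjacency (distinct, with nothing strictly between) and edge weights
(distances of adjacent vertices) are metric notions, so this bijection is a weighted isomorphism.
-/

def leafProfile {L V : Type*} (d : V → V → ℝ) (ι : L → V) (v : V) : L → ℝ := fun l => d v (ι l)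

namespace SimpleGraph

open Walk

variable {V : Type*} {G : SimpleGraph V}

lemma nontrivial_of_degree_pos {v : V} [Fintype (G.neighborSet v)] (hv : 0 < G.degree v) :
    Nontrivial V :=
  let ⟨x, hx⟩ := (G.degree_pos_iff_exists_adj v).1 hv
  ⟨⟨v, x, hx.ne⟩⟩

lemma Walk.IsPath.append_of_support_inter {u v w : V} {p : G.Walk u v} {q : G.Walk v w}
    (hp : p.IsPath) (hq : q.IsPath) (h : ∀ x ∈ p.support, x ∈ q.support → x = v) :
    (p.append q).IsPath := by
  rw [isPath_def, support_append, List.nodup_append]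
  refine ⟨hp.support_nodup, hq.support_nodup.sublist (List.tail_sublist _), ?_⟩
  rintro x hxp _ hxq rfl
  have hx := h x hxp (List.mem_of_mem_tail hxq)
  subst hx
  have := hq.support_nodup
  rw [← cons_tail_support, List.nodup_cons] at this
  exact this.1 hxq

namespace IsTree

variable (hT : G.IsTree)

noncomputable def path (a b : V) : G.Walk a b := (hT.existsUnique_path a b).choose

lemma isPath_path (a b : V) : (hT.path a b).IsPath := (hT.existsUnique_path a b).choose_spec.1

lemma eq_path {a b : V} {p : G.Walk a b} (hp : p.IsPath) : p = hT.path a b :=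
  (hT.existsUnique_path a b).choose_spec.2 p hp

lemma reverse_path (a b : V) : (hT.path a b).reverse = hT.path b a :=
  hT.eq_path (hT.isPath_path a b).reverse

lemma mem_support_path_comm {a b c : V} :
    c ∈ (hT.path a b).support ↔ c ∈ (hT.path b a).support := by
  rw [← hT.reverse_path b a, support_reverse, List.mem_reverse]

lemma support_path_subset_left {a b c : V} (hc : c ∈ (hT.path a b).support) :
    (hT.path a c).support ⊆ (hT.path a b).support := by
  classical
  rw [← hT.eq_path ((hT.isPath_path a b).takeUntil hc)]
  exact support_takeUntil_subset_support _ hc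

lemma support_path_subset_right {a b c : V} (hc : c ∈ (hT.path a b).support) :
    (hT.path c b).support ⊆ (hT.path a b).support := by
  classical
  rw [← hT.eq_path ((hT.isPath_path a b).dropUntil hc)]
  exact support_dropUntil_subset_support _ hc

lemma path_of_adj {a b : V} (hab : G.Adj a b) : hT.path a b = cons hab nil :=
  (hT.eq_path (IsPath.nil.cons (by simpa using hab.ne))).symm

lemma snd_path_eq_of_mem {m x y : V} (hy : y ∈ (hT.path m x).support) (hym : y ≠ m) :
    (hT.path m y).snd = (hT.path m x).snd := by
  have hnil : ¬ (hT.path m y).Nil := not_nil_of_ne hym.symm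
  exact hT.isAcyclic.eq_snd_of_adj_start (hT.isPath_path m x) (adj_snd hnil)
    (hT.support_path_subset_left hy (getVert_mem_support _ 1))

lemma exists_degree_eq_one_mem_support_path [Fintype V] [DecidableRel G.Adj] [Nontrivial V]
    (u v : V) : ∃ x, G.degree x = 1 ∧ v ∈ (hT.path u x).support := by
  classical
  obtain ⟨x, hx, hmax⟩ := (Finset.univ.filter fun x => v ∈ (hT.path u x).support).exists_max_image
    (fun x => (hT.path u x).length) ⟨v, by simp [end_mem_support]⟩
  rw [Finset.mem_filter] at hx
  refine ⟨x, le_antisymm ?_ (hT.connected.preconnected.degree_pos_of_nontrivial x), hx.2⟩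
  have hnbr : ∀ y, G.Adj x y → y = (hT.path u x).penultimate := fun y hxy => by
    refine hT.isAcyclic.eq_penultimate_of_adj_end (hT.isPath_path u x) hxy ?_
    by_contra hy
    have hext := hT.eq_path ((hT.isPath_path u x).concat hy hxy)
    have hlen := hmax y (by
      rw [Finset.mem_filter, ← hext]
      exact ⟨Finset.mem_univ _, support_subset_support_concat _ _ hx.2⟩)
    rw [← hext, length_concat] at hlen
    omega
  calc G.degree x = (G.neighborFinset x).card := (card_neighborFinset_eq_degree G x).symm
    _ ≤ ({(hT.path u x).penultimate} : Finset V).card :=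
        Finset.card_le_card fun y hy => by simpa using hnbr y ((mem_neighborFinset G x y).1 hy)
    _ = 1 := Finset.card_singleton _

include hT in
lemma subsingleton_of_forall_degree_ne_one [Fintype V] [DecidableRel G.Adj]
    (hdeg : ∀ v, G.degree v ≠ 1) : Subsingleton V := by
  by_contra hV
  rw [not_subsingleton_iff_nontrivial] at hV
  obtain ⟨v, hv⟩ := hT.exists_vert_degree_one_of_nontrivial
  exact hdeg v hv

end IsTree

structure IsTreeMetric (G : SimpleGraph V) (w : Sym2 V → ℝ) (d : V → V → ℝ) : Prop where
  isTree : G.IsTree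
  weight_pos : ∀ e ∈ G.edgeSet, 0 < w e
  dist_eq_sum : ∀ a b (p : G.Walk a b), p.IsPath → d a b = (p.edges.map w).sum

namespace IsTreeMetric

variable {V' : Type*} {G' : SimpleGraph V'} {w : Sym2 V → ℝ} {d : V → V → ℝ}
  {w' : Sym2 V' → ℝ} {d' : V' → V' → ℝ} (h : IsTreeMetric G w d)
include h

lemma dist_self (a : V) : d a a = 0 := by
  simpa using h.dist_eq_sum a a nil IsPath.nil

lemma dist_comm (a b : V) : d a b = d b a := by
  have hp := h.isTree.isPath_path a b
  rw [h.dist_eq_sum a b _ hp, h.dist_eq_sum b a _ hp.reverse, edges_reverse, List.map_reverse,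
    List.sum_reverse]

lemma dist_of_adj {a b : V} (hab : G.Adj a b) : d a b = w s(a, b) := by
  simpa using h.dist_eq_sum a b (cons hab nil) (IsPath.nil.cons (by simpa using hab.ne))

lemma dist_pos {a b : V} (hab : a ≠ b) : 0 < d a b := by
  have hp := h.isTree.isPath_path a b
  rw [h.dist_eq_sum a b _ hp]
  refine List.sum_pos _ (fun x hx => ?_) ?_
  · obtain ⟨e, he, rfl⟩ := List.mem_map.1 hx
    exact h.weight_pos e (edges_subset_edgeSet _ he)
  · simpa [edges_eq_nil] using not_nil_of_ne hab

lemma dist_eq_zero {a b : V} : d a b = 0 ↔ a = b :=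
  ⟨fun h0 => by_contra fun hab => (h.dist_pos hab).ne' h0, by rintro rfl; exact h.dist_self a⟩

lemma dist_nonneg (a b : V) : 0 ≤ d a b := by
  rcases eq_or_ne a b with rfl | hab
  · exact (h.dist_self a).ge
  · exact (h.dist_pos hab).le

lemma dist_add_dist_of_mem_support {a b c : V} (hc : c ∈ (h.isTree.path a b).support) :
    d a c + d c b = d a b := by
  classical
  have hp := h.isTree.isPath_path a b
  rw [h.dist_eq_sum a c _ (hp.takeUntil hc), h.dist_eq_sum c b _ (hp.dropUntil hc),
    h.dist_eq_sum a b _ hp, ← List.sum_append, ← List.map_append, ← edges_append, take_spec]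

lemma exists_median (a b c : V) : ∃ m, m ∈ (h.isTree.path a b).support ∧
    m ∈ (h.isTree.path a c).support ∧ m ∈ (h.isTree.path b c).support := by
  classical
  obtain ⟨m, hm, hmax⟩ := ((h.isTree.path a b).support.toFinset.filter
    (· ∈ (h.isTree.path a c).support)).exists_max_image (d a) ⟨a, by simp [start_mem_support]⟩
  simp only [Finset.mem_filter, List.mem_toFinset] at hm hmax
  obtain ⟨hmb, hmc⟩ := hm
  -- a common vertex of the two paths beyond `m` would be farther from `a` than `m`
  have hdisj : ∀ y ∈ (h.isTree.path m b).support, y ∈ (h.isTree.path m c).support → y = m := by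
    intro y hyb hyc
    by_contra hym
    have hyb' := h.isTree.support_path_subset_right hmb hyb
    have := hmax y ⟨hyb', h.isTree.support_path_subset_right hmc hyc⟩
    have := h.dist_add_dist_of_mem_support hyb
    have := h.dist_add_dist_of_mem_support hmb
    have := h.dist_add_dist_of_mem_support hyb'
    have := h.dist_pos (Ne.symm hym)
    linarith
  have hbc := (h.isTree.isPath_path m b).reverse.append_of_support_inter
    (h.isTree.isPath_path m c) (by simpa using hdisj)
  refine ⟨m, hmb, hmc, ?_⟩
  rw [← h.isTree.eq_path hbc, mem_support_append_iff]
  exact Or.inr (start_mem_support _)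

lemma dist_triangle (a b c : V) : d a b ≤ d a c + d c b := by
  obtain ⟨m, hac, hab, hcb⟩ := h.exists_median a c b
  have := h.dist_add_dist_of_mem_support hac
  have := h.dist_add_dist_of_mem_support hab
  have := h.dist_add_dist_of_mem_support hcb
  have := h.dist_comm c m
  have := h.dist_nonneg m c
  linarith

lemma mem_support_path_iff {a b c : V} :
    c ∈ (h.isTree.path a b).support ↔ d a c + d c b = d a b := by
  refine ⟨h.dist_add_dist_of_mem_support, fun hc => ?_⟩
  obtain ⟨m, hab, hac, hbc⟩ := h.exists_median a b c
  have := h.dist_add_dist_of_mem_support hab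
  have := h.dist_add_dist_of_mem_support hac
  have := h.dist_add_dist_of_mem_support hbc
  have := h.dist_comm b c
  have := h.dist_comm b m
  obtain rfl : m = c := h.dist_eq_zero.1 (by linarith)
  exact hab

lemma mem_support_path_of_snd_ne {m x y : V}
    (hxy : (h.isTree.path m x).snd ≠ (h.isTree.path m y).snd) :
    m ∈ (h.isTree.path x y).support := by
  obtain ⟨q, hxy', hxm, hym⟩ := h.exists_median x y m
  obtain rfl | hqm := eq_or_ne q m
  · exact hxy'
  rw [h.isTree.mem_support_path_comm] at hxm hym
  exact absurd ((h.isTree.snd_path_eq_of_mem hxm hqm).symm.trans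
    (h.isTree.snd_path_eq_of_mem hym hqm)) hxy

lemma snd_ne_of_mem_support_path {m x y : V} (hm : m ∈ (h.isTree.path x y).support)
    (hx : x ≠ m) : (h.isTree.path m x).snd ≠ (h.isTree.path m y).snd := by
  intro hs
  set s := (h.isTree.path m x).snd
  have hsx : s ∈ (h.isTree.path m x).support := getVert_mem_support _ 1
  have hsy : s ∈ (h.isTree.path m y).support := hs ▸ getVert_mem_support _ 1
  have : 0 < d m s := h.dist_pos (adj_snd (not_nil_of_ne (p := h.isTree.path m x) hx.symm)).ne
  have := h.dist_add_dist_of_mem_support hsx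
  have := h.dist_add_dist_of_mem_support hsy
  have := h.dist_add_dist_of_mem_support hm
  have := h.dist_triangle x y s
  have := h.dist_comm x m
  have := h.dist_comm x s
  linarith

lemma mem_support_path_or {a b m : V} (hm : m ∈ (h.isTree.path a b).support) (z : V) :
    m ∈ (h.isTree.path z a).support ∨ m ∈ (h.isTree.path z b).support := by
  obtain rfl | ha := eq_or_ne a m
  · exact Or.inl (end_mem_support _)
  by_contra! hz
  have hza : (h.isTree.path m z).snd = (h.isTree.path m a).snd :=
    by_contra fun hne => hz.1 (h.mem_support_path_of_snd_ne hne)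
  have hzb : (h.isTree.path m z).snd = (h.isTree.path m b).snd :=
    by_contra fun hne => hz.2 (h.mem_support_path_of_snd_ne hne)
  exact h.snd_ne_of_mem_support_path hm ha (hza.symm.trans hzb)

lemma two_mul_dist_median {a₁ a₂ a₃ m : V} (h₁₂ : m ∈ (h.isTree.path a₁ a₂).support)
    (h₁₃ : m ∈ (h.isTree.path a₁ a₃).support) (h₂₃ : m ∈ (h.isTree.path a₂ a₃).support)
    (z : V) : 2 * d z m = max (max (d z a₁ + d z a₂ - d a₁ a₂) (d z a₁ + d z a₃ - d a₁ a₃))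
      (d z a₂ + d z a₃ - d a₂ a₃) := by
  have upper : ∀ {x y}, m ∈ (h.isTree.path x y).support → d z x + d z y - d x y ≤ 2 * d z m := by
    intro x y hm
    have := h.dist_add_dist_of_mem_support hm
    have := h.dist_triangle z x m
    have := h.dist_triangle z y m
    have := h.dist_comm m x
    linarith
  have attained : ∀ {x y}, m ∈ (h.isTree.path x y).support → m ∈ (h.isTree.path z x).support →
      m ∈ (h.isTree.path z y).support → 2 * d z m ≤ d z x + d z y - d x y := by
    intro x y hm hx hy
    have := h.dist_add_dist_of_mem_support hm
    have := h.dist_add_dist_of_mem_support hx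
    have := h.dist_add_dist_of_mem_support hy
    have := h.dist_comm m x
    linarith
  refine le_antisymm ?_ (max_le (max_le (upper h₁₂) (upper h₁₃)) (upper h₂₃))
  by_cases hz₁ : m ∈ (h.isTree.path z a₁).support
  · by_cases hz₂ : m ∈ (h.isTree.path z a₂).support
    · exact le_max_of_le_left (le_max_of_le_left (attained h₁₂ hz₁ hz₂))
    · have hz₃ := (h.mem_support_path_or h₂₃ z).resolve_left hz₂
      exact le_max_of_le_left (le_max_of_le_right (attained h₁₃ hz₁ hz₃))
  · exact le_max_of_le_right (attained h₂₃ ((h.mem_support_path_or h₁₂ z).resolve_left hz₁)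
      ((h.mem_support_path_or h₁₃ z).resolve_left hz₁))

lemma adj_iff {a b : V} :
    G.Adj a b ↔ a ≠ b ∧ ∀ c, d a c + d c b = d a b → c = a ∨ c = b := by
  refine ⟨fun hab => ⟨hab.ne, fun c hc => ?_⟩, fun ⟨hab, hc⟩ => ?_⟩
  · simpa [h.isTree.path_of_adj hab] using h.mem_support_path_iff.2 hc
  · have hnil := not_nil_of_ne (p := h.isTree.path a b) hab
    have hs := adj_snd hnil
    rcases hc _ (h.dist_add_dist_of_mem_support (getVert_mem_support _ 1)) with hsa | hsb
    · exact absurd hsa hs.ne.symm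
    · exact hsb ▸ hs

def isoOfIsometry (h' : IsTreeMetric G' w' d') (e : V ≃ V') (he : ∀ a b, d' (e a) (e b) = d a b) :
    G ≃g G' where
  toEquiv := e
  map_rel_iff' {a b} := by
    simp only [h.adj_iff, h'.adj_iff, e.surjective.forall, he, ne_eq, e.apply_eq_iff_eq]

lemma weight_isoOfIsometry (h' : IsTreeMetric G' w' d') (e : V ≃ V')
    (he : ∀ a b, d' (e a) (e b) = d a b) {a b : V} (hab : G.Adj a b) :
    w s(a, b) = w' s(h.isoOfIsometry h' e he a, h.isoOfIsometry h' e he b) := by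
  rw [← h.dist_of_adj hab, ← h'.dist_of_adj ((h.isoOfIsometry h' e he).map_adj_iff.2 hab)]
  exact (he a b).symm

section Leaves

variable {L : Type*} {ι : L → V} {ι' : L → V'} [Fintype V] [DecidableRel G.Adj]

lemma exists_degree_eq_one_dist_eq_add [Nontrivial V] (u v : V) :
    ∃ x, G.degree x = 1 ∧ d u x = d u v + d v x := by
  obtain ⟨x, hx, hv⟩ := h.isTree.exists_degree_eq_one_mem_support_path u v
  exact ⟨x, hx, (h.dist_add_dist_of_mem_support hv).symm⟩

lemma exists_degree_eq_one_median {v : V} (hv : 3 ≤ G.degree v) :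
    ∃ a b c, G.degree a = 1 ∧ G.degree b = 1 ∧ G.degree c = 1 ∧
      v ∈ (h.isTree.path a b).support ∧ v ∈ (h.isTree.path a c).support ∧
      v ∈ (h.isTree.path b c).support := by
  classical
  obtain ⟨x₁, x₂, x₃, hx₁, hx₂, hx₃, h₁₂, h₁₃, h₂₃⟩ := Finset.two_lt_card_iff.1
    (by rwa [card_neighborFinset_eq_degree] : 2 < (G.neighborFinset v).card)
  simp only [mem_neighborFinset] at hx₁ hx₂ hx₃
  have : Nontrivial V := ⟨⟨v, x₁, hx₁.ne⟩⟩
  have leaf_through : ∀ x, G.Adj v x → ∃ a, G.degree a = 1 ∧ (h.isTree.path v a).snd = x := by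
    intro x hx
    obtain ⟨a, ha, hxa⟩ := h.isTree.exists_degree_eq_one_mem_support_path v x
    exact ⟨a, ha, (h.isTree.isAcyclic.eq_snd_of_adj_start (h.isTree.isPath_path v a) hx hxa).symm⟩
  obtain ⟨a, ha, rfl⟩ := leaf_through x₁ hx₁
  obtain ⟨b, hb, rfl⟩ := leaf_through x₂ hx₂
  obtain ⟨c, hc, rfl⟩ := leaf_through x₃ hx₃
  exact ⟨a, b, c, ha, hb, hc, h.mem_support_path_of_snd_ne h₁₂, h.mem_support_path_of_snd_ne h₁₃,
    h.mem_support_path_of_snd_ne h₂₃⟩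

variable (hleaf : ∀ x, G.degree x = 1 → x ∈ Set.range ι)
include hleaf

lemma dist_le_of_leafProfile_eq [Nontrivial V] (h' : IsTreeMetric G' w' d') {u v : V} {u' v' : V'}
    (hu : leafProfile d ι u = leafProfile d' ι' u')
    (hv : leafProfile d ι v = leafProfile d' ι' v') :
    d u v ≤ d' u' v' := by
  obtain ⟨x, hx, hux⟩ := h.exists_degree_eq_one_dist_eq_add u v
  obtain ⟨l, rfl⟩ := hleaf x hx
  have hul := congrFun hu l
  have hvl := congrFun hv l
  simp only [leafProfile] at hul hvl
  linarith [h'.dist_triangle u' (ι' l) v']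

lemma injective_leafProfile [Nontrivial V] : Function.Injective (leafProfile d ι) := by
  intro u v huv
  refine h.dist_eq_zero.1 (le_antisymm ?_ (h.dist_nonneg u v))
  simpa [h.dist_self] using h.dist_le_of_leafProfile_eq hleaf h (v := v) (v' := v) huv rfl

/-- An interior vertex is the median of three leaves, and a median is located by leaf distances
alone (`two_mul_dist_median`), so the median of the same three leaves in the other tree has the same
leaf profile. -/
lemma exists_leafProfile_eq [Nontrivial V] (h' : IsTreeMetric G' w' d')
    (hdeg : ∀ x, 2 ≤ G.degree x → 3 ≤ G.degree x)
    (hagree : ∀ l₁ l₂, d (ι l₁) (ι l₂) = d' (ι' l₁) (ι' l₂)) (v : V) :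
    ∃ v', leafProfile d' ι' v' = leafProfile d ι v := by
  by_cases hv : G.degree v = 1
  · obtain ⟨l, rfl⟩ := hleaf v hv
    exact ⟨ι' l, funext fun l' => (hagree l l').symm⟩
  have hv₃ : 3 ≤ G.degree v :=
    hdeg v (by have := h.isTree.connected.preconnected.degree_pos_of_nontrivial v; omega)
  obtain ⟨a, b, c, ha, hb, hc, hab, hac, hbc⟩ := h.exists_degree_eq_one_median hv₃
  obtain ⟨la, rfl⟩ := hleaf a ha
  obtain ⟨lb, rfl⟩ := hleaf b hb
  obtain ⟨lc, rfl⟩ := hleaf c hc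
  obtain ⟨m, hab', hac', hbc'⟩ := h'.exists_median (ι' la) (ι' lb) (ι' lc)
  refine ⟨m, funext fun l => ?_⟩
  have key : 2 * d (ι l) v = 2 * d' (ι' l) m := by
    rw [h.two_mul_dist_median hab hac hbc, h'.two_mul_dist_median hab' hac' hbc']
    simp only [hagree]
  simp only [leafProfile]
  rw [h'.dist_comm, h.dist_comm]
  linarith

end Leaves

section Equiv

variable {L : Type*} {ι : L → V} {ι' : L → V'} [Fintype V] [DecidableRel G.Adj]
  [Fintype V'] [DecidableRel G'.Adj]

lemma exists_equiv_leafProfile [Nontrivial V] [Nontrivial V'] (h' : IsTreeMetric G' w' d')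
    (hleaf : ∀ x, G.degree x = 1 → x ∈ Set.range ι)
    (hleaf' : ∀ x, G'.degree x = 1 → x ∈ Set.range ι')
    (hdeg : ∀ x, 2 ≤ G.degree x → 3 ≤ G.degree x)
    (hdeg' : ∀ x, 2 ≤ G'.degree x → 3 ≤ G'.degree x)
    (hagree : ∀ l₁ l₂, d (ι l₁) (ι l₂) = d' (ι' l₁) (ι' l₂)) :
    ∃ e : V ≃ V', ∀ v, leafProfile d' ι' (e v) = leafProfile d ι v := by
  have hinj := h.injective_leafProfile hleaf
  have hinj' := h'.injective_leafProfile hleaf'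
  have hrange : Set.range (leafProfile d ι) = Set.range (leafProfile d' ι') := by
    apply subset_antisymm <;> rintro _ ⟨v, rfl⟩
    · exact h.exists_leafProfile_eq hleaf h' hdeg hagree v
    · exact h'.exists_leafProfile_eq hleaf' h hdeg' (fun l₁ l₂ => (hagree l₁ l₂).symm) v
  exact ⟨(Equiv.ofInjective _ hinj).trans ((Equiv.setCongr hrange).trans
    (Equiv.ofInjective _ hinj').symm), fun v => Equiv.apply_ofInjective_symm hinj' _⟩

lemma exists_equiv_isometry_of_dist_leaf_eq (h' : IsTreeMetric G' w' d')
    (hleaf : ∀ x, G.degree x = 1 ↔ x ∈ Set.range ι)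
    (hleaf' : ∀ x, G'.degree x = 1 ↔ x ∈ Set.range ι')
    (hdeg : ∀ x, 2 ≤ G.degree x → 3 ≤ G.degree x)
    (hdeg' : ∀ x, 2 ≤ G'.degree x → 3 ≤ G'.degree x)
    (hagree : ∀ l₁ l₂, d (ι l₁) (ι l₂) = d' (ι' l₁) (ι' l₂)) :
    ∃ e : V ≃ V', (∀ l, e (ι l) = ι' l) ∧ ∀ a b, d' (e a) (e b) = d a b := by
  rcases isEmpty_or_nonempty L with hL | ⟨⟨l⟩⟩
  · have := h.isTree.subsingleton_of_forall_degree_ne_one fun v hv =>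
      hL.elim ((hleaf v).1 hv).choose
    have := h'.isTree.subsingleton_of_forall_degree_ne_one fun v hv =>
      hL.elim ((hleaf' v).1 hv).choose
    have := h.isTree.connected.nonempty
    have := h'.isTree.connected.nonempty
    refine ⟨equivOfSubsingletonOfSubsingleton (fun _ => Classical.arbitrary V')
      (fun _ => Classical.arbitrary V), hL.elim, fun a b => ?_⟩
    rw [Subsingleton.elim a b, h.dist_self, h'.dist_self]
  have : Nontrivial V := nontrivial_of_degree_pos (v := ι l) ((hleaf _).2 ⟨l, rfl⟩ ▸ one_pos)
  have : Nontrivial V' := nontrivial_of_degree_pos (v := ι' l) ((hleaf' _).2 ⟨l, rfl⟩ ▸ one_pos)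
  have hl x := (hleaf x).1
  have hl' x := (hleaf' x).1
  obtain ⟨e, he⟩ := h.exists_equiv_leafProfile h' hl hl' hdeg hdeg' hagree
  refine ⟨e, fun l => h'.injective_leafProfile hl' ?_, fun a b => le_antisymm ?_ ?_⟩
  · exact (he (ι l)).trans (funext (hagree l))
  · exact h'.dist_le_of_leafProfile_eq hl' h (he a) (he b)
  · exact h.dist_le_of_leafProfile_eq hl h' (he a).symm (he b).symm

end Equiv

end IsTreeMetric

end SimpleGraph

theorem stmt13_general {V V' L : Type*} [Fintype V] [Fintype V']
    (G : SimpleGraph V) (G' : SimpleGraph V')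
    [DecidableRel G.Adj] [DecidableRel G'.Adj]
    (hT : G.IsTree) (hT' : G'.IsTree)
    (w : Sym2 V → ℝ) (w' : Sym2 V' → ℝ)
    (hw : ∀ e ∈ G.edgeSet, 0 < w e) (hw' : ∀ e ∈ G'.edgeSet, 0 < w' e)
    (ι : L → V) (ι' : L → V')
    (hleaf : ∀ v : V, G.degree v = 1 ↔ v ∈ Set.range ι)
    (hleaf' : ∀ v : V', G'.degree v = 1 ↔ v ∈ Set.range ι')
    (hdeg : ∀ v : V, 2 ≤ G.degree v → 3 ≤ G.degree v)
    (hdeg' : ∀ v : V', 2 ≤ G'.degree v → 3 ≤ G'.degree v)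
    (d : V → V → ℝ) (d' : V' → V' → ℝ)
    (hd : ∀ (a b : V) (p : G.Walk a b), p.IsPath → d a b = (p.edges.map w).sum)
    (hd' : ∀ (a b : V') (p : G'.Walk a b), p.IsPath →
      d' a b = (p.edges.map w').sum)
    (hagree : ∀ l₁ l₂ : L, d (ι l₁) (ι l₂) = d' (ι' l₁) (ι' l₂)) :
    ∃ φ : G ≃g G', (∀ l : L, φ (ι l) = ι' l) ∧
      ∀ a b : V, G.Adj a b → w s(a, b) = w' s(φ a, φ b) := by
  have hM : G.IsTreeMetric w d := ⟨hT, hw, hd⟩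
  have hM' : G'.IsTreeMetric w' d' := ⟨hT', hw', hd'⟩
  obtain ⟨e, he_leaf, he⟩ :=
    hM.exists_equiv_isometry_of_dist_leaf_eq hM' hleaf hleaf' hdeg hdeg' hagree
  exact ⟨hM.isoOfIsometry hM' e he, he_leaf, fun _ _ => hM.weight_isoOfIsometry hM' e he⟩

/-- Two positively edge-weighted finite trees whose leaf sets are identified
with a common set `L`, all of whose internal vertices have degree ≥ 3, and
whose weighted leaf-to-leaf distances agree, are isomorphic via a
weight-preserving isomorphism fixing `L`. -/
theorem stmt13 {V V' L : Type*} [Fintype V] [Fintype V']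
    [DecidableEq V] [DecidableEq V']
    (G : SimpleGraph V) (G' : SimpleGraph V')
    [DecidableRel G.Adj] [DecidableRel G'.Adj]
    (hT : G.IsTree) (hT' : G'.IsTree)
    (w : Sym2 V → ℝ) (w' : Sym2 V' → ℝ)
    (hw : ∀ e ∈ G.edgeSet, 0 < w e) (hw' : ∀ e ∈ G'.edgeSet, 0 < w' e)
    (ι : L → V) (ι' : L → V')
    (hι : Function.Injective ι) (hι' : Function.Injective ι')
    (hleaf : ∀ v : V, G.degree v = 1 ↔ v ∈ Set.range ι)
    (hleaf' : ∀ v : V', G'.degree v = 1 ↔ v ∈ Set.range ι')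
    (hdeg : ∀ v : V, 2 ≤ G.degree v → 3 ≤ G.degree v)
    (hdeg' : ∀ v : V', 2 ≤ G'.degree v → 3 ≤ G'.degree v)
    (d : V → V → ℝ) (d' : V' → V' → ℝ)
    (hd : ∀ (a b : V) (p : G.Walk a b), p.IsPath → d a b = (p.edges.map w).sum)
    (hd' : ∀ (a b : V') (p : G'.Walk a b), p.IsPath →
      d' a b = (p.edges.map w').sum)
    (hagree : ∀ l₁ l₂ : L, d (ι l₁) (ι l₂) = d' (ι' l₁) (ι' l₂)) :
    ∃ φ : G ≃g G', (∀ l : L, φ (ι l) = ι' l) ∧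
      ∀ a b : V, G.Adj a b → w s(a, b) = w' s(φ a, φ b) :=
  stmt13_general G G' hT hT' w w' hw hw' ι ι' hleaf hleaf' hdeg hdeg' d d' hd hd' hagree
end

section
/- In a tree with root t and positive edge resistances r, for non-root nodes a, b: H⁻¹(a,b) = ( d(a,t) + d(b,t) − d(a,b) ) / 2, where H is the reduced Laplacian with weights 1/r and d is the weighted path distance with weights r. -/
/-!
The candidate inverse is the Gromov product `(a|b)_t = (d(a,t) + d(b,t) - d(a,b)) / 2`; it is
enough to check that it is a right inverse of `H`. For a neighbour `c` of `a`, the difference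
`d(a,x) - d(c,x)` is `r(ac)` if `c` lies on the path from `a` to `x` and `-r(ac)` otherwise, and
in a tree exactly one neighbour of `a` lies on that path when `x ≠ a`, none when `x = a`. So
`∑_c L(a,c) d(c,x) = 2 [a ≠ x] - deg a`, and taking `x = t` and `x = b` gives
`∑_c L(a,c) (c|b)_t = [a = b]` for `a ≠ t`. Since `(t|b)_t = 0`, deleting the root row and
column does not change these sums.
-/
open Finset

namespace SimpleGraph

variable {V : Type*} {G : SimpleGraph V}

def IsPathDist (G : SimpleGraph V) (r : Sym2 V → ℝ) (d : V → V → ℝ) : Prop :=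
  ∀ (a b : V) (p : G.Walk a b), p.IsPath → d a b = (p.edges.map r).sum

def IsResistanceLaplacian [Fintype V] [DecidableEq V] (G : SimpleGraph V) [DecidableRel G.Adj]
    (r : Sym2 V → ℝ) (L : Matrix V V ℝ) : Prop :=
  ∀ a b : V, L a b =
    if a = b then ∑ c ∈ G.neighborFinset a, (r s(a, c))⁻¹
    else if G.Adj a b then -(r s(a, b))⁻¹ else 0

noncomputable def gromovProduct (d : V → V → ℝ) (t a b : V) : ℝ :=
  (d a t + d b t - d a b) / 2

theorem IsAcyclic.card_neighborFinset_filter_mem_support (hG : G.IsAcyclic) {a x : V}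
    [Fintype (G.neighborSet a)] [DecidableEq V] {p : G.Walk a x} (hp : p.IsPath) :
    #{c ∈ G.neighborFinset a | c ∈ p.support} = if a = x then 0 else 1 := by
  cases p with
  | nil => simpa using fun c h => h.ne'
  | @cons _ c _ h q =>
    have hax : a ≠ x := by
      rintro rfl
      exact (Walk.cons_isPath_iff h q).mp hp |>.2 q.end_mem_support
    rw [if_neg hax, card_eq_one]
    refine ⟨c, eq_singleton_iff_unique_mem.mpr ⟨by simp [h], fun c' hc' => ?_⟩⟩
    rw [mem_filter, mem_neighborFinset] at hc'
    simpa using hG.eq_snd_of_adj_start hp hc'.1 hc'.2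

theorem IsResistanceLaplacian.sum_mul_eq_sum_neighborFinset_div [Fintype V] [DecidableEq V]
    [DecidableRel G.Adj] {r : Sym2 V → ℝ} {L : Matrix V V ℝ}
    (hL : G.IsResistanceLaplacian r L) (f : V → ℝ) (a : V) :
    ∑ c, L a c * f c = ∑ c ∈ G.neighborFinset a, (f a - f c) / r s(a, c) := by
  rw [← add_sum_erase _ _ (mem_univ a)]
  have hoff : ∑ c ∈ univ.erase a, L a c * f c =
      ∑ c ∈ G.neighborFinset a, -(r s(a, c))⁻¹ * f c := calc
    _ = ∑ c ∈ univ.erase a, if G.Adj a c then -(r s(a, c))⁻¹ * f c else 0 := by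
        refine sum_congr rfl fun c hc => ?_
        rw [hL, if_neg (ne_of_mem_erase hc).symm]
        split_ifs <;> simp
    _ = ∑ c ∈ G.neighborFinset a, -(r s(a, c))⁻¹ * f c := by
        rw [sum_erase _ (by simp), neighborFinset_eq_filter, sum_filter]
  rw [hoff, hL, if_pos rfl, sum_mul, ← sum_add_distrib]
  refine sum_congr rfl fun c _ => ?_
  ring

namespace IsPathDist

variable {r : Sym2 V → ℝ} {d : V → V → ℝ}

theorem dist_self (hd : G.IsPathDist r d) (v : V) : d v v = 0 := by
  simpa using hd v v .nil .nil

theorem dist_comm (hd : G.IsPathDist r d) {u v : V} (h : G.Reachable u v) : d u v = d v u := by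
  obtain ⟨p, hp⟩ := h.exists_isPath
  rw [hd u v p hp, hd v u p.reverse hp.reverse, Walk.edges_reverse, List.map_reverse,
    List.sum_reverse]

theorem dist_eq_add_of_notMem_support (hd : G.IsPathDist r d) {a c x : V} (h : G.Adj c a)
    {p : G.Walk a x} (hp : p.IsPath) (hc : c ∉ p.support) : d c x = r s(c, a) + d a x := by
  rw [hd c x (.cons h p) (hp.cons hc), hd a x p hp, Walk.edges_cons, List.map_cons,
    List.sum_cons]

theorem dist_eq_add_of_mem_support (hd : G.IsPathDist r d) (hG : G.IsAcyclic) {a c x : V}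
    (h : G.Adj a c) {p : G.Walk a x} (hp : p.IsPath) (hc : c ∈ p.support) :
    d a x = r s(a, c) + d c x := by
  obtain ⟨p₀, p₁, hp₀, hp₁, rfl⟩ := hp.mem_support_iff_exists_append.mp hc
  obtain rfl : p₀ = Walk.cons h .nil :=
    congrArg Subtype.val ((hG.subsingleton_path a c).elim ⟨p₀, hp₀⟩ (Path.singleton h))
  rw [hd a x _ hp, hd c x p₁ hp₁]
  simp

theorem dist_sub_dist_of_adj [DecidableEq V] (hd : G.IsPathDist r d) (hG : G.IsAcyclic)
    {a c x : V} (h : G.Adj a c) {p : G.Walk a x} (hp : p.IsPath) :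
    d a x - d c x = if c ∈ p.support then r s(a, c) else -r s(a, c) := by
  split_ifs with hc
  · rw [hd.dist_eq_add_of_mem_support hG h hp hc]; ring
  · rw [hd.dist_eq_add_of_notMem_support h.symm hp hc, Sym2.eq_swap]; ring

theorem sum_neighborFinset_dist_sub_div {a : V} [DecidableEq V] [Fintype (G.neighborSet a)]
    (hd : G.IsPathDist r d) (hT : G.IsTree) (hr : ∀ e ∈ G.edgeSet, r e ≠ 0) (x : V) :
    ∑ c ∈ G.neighborFinset a, (d a x - d c x) / r s(a, c) =
      2 * (if a = x then 0 else 1) - G.degree a := by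
  obtain ⟨p, hp⟩ := (hT.connected a x).exists_isPath
  calc ∑ c ∈ G.neighborFinset a, (d a x - d c x) / r s(a, c)
      = ∑ c ∈ G.neighborFinset a, (2 * (if c ∈ p.support then 1 else 0) - 1 : ℝ) := by
        refine sum_congr rfl fun c hc => ?_
        rw [mem_neighborFinset] at hc
        have hrc := hr _ (G.mem_edgeSet.mpr hc)
        rw [hd.dist_sub_dist_of_adj hT.isAcyclic hc hp]
        split_ifs <;> field_simp <;> ring
    _ = 2 * #{c ∈ G.neighborFinset a | c ∈ p.support} - #(G.neighborFinset a) := by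
        rw [sum_sub_distrib, ← mul_sum, sum_boole, sum_const, nsmul_one]
    _ = 2 * (if a = x then 0 else 1) - G.degree a := by
        rw [hT.isAcyclic.card_neighborFinset_filter_mem_support hp, card_neighborFinset_eq_degree]
        split_ifs <;> simp

theorem sum_laplacian_mul_gromovProduct [Fintype V] [DecidableEq V]
    [DecidableRel G.Adj] {L : Matrix V V ℝ} (hL : G.IsResistanceLaplacian r L)
    (hd : G.IsPathDist r d) (hT : G.IsTree) (hr : ∀ e ∈ G.edgeSet, r e ≠ 0)
    {a t : V} (hat : a ≠ t) (b : V) :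
    ∑ c, L a c * gromovProduct d t c b = if a = b then 1 else 0 := by
  rw [hL.sum_mul_eq_sum_neighborFinset_div]
  calc ∑ c ∈ G.neighborFinset a, (gromovProduct d t a b - gromovProduct d t c b) / r s(a, c)
      = (∑ c ∈ G.neighborFinset a, (d a t - d c t) / r s(a, c) -
          ∑ c ∈ G.neighborFinset a, (d a b - d c b) / r s(a, c)) / 2 := by
        rw [← sum_sub_distrib, sum_div]
        refine sum_congr rfl fun c _ => ?_
        simp only [gromovProduct]
        ring
    _ = if a = b then 1 else 0 := by
        rw [hd.sum_neighborFinset_dist_sub_div hT hr, hd.sum_neighborFinset_dist_sub_div hT hr,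
          if_neg hat]
        split_ifs <;> ring

end IsPathDist

end SimpleGraph

open SimpleGraph

/-- In a tree with root `t` and positive edge resistances `r`, for non-root
nodes `a`, `b`: `H⁻¹ a b = (d a t + d b t - d a b) / 2`, where `H` is the
reduced Laplacian with weights `1/r` and `d` the weighted path distance. -/
theorem stmt19 {V : Type*} [Fintype V] [DecidableEq V]
    (G : SimpleGraph V) [DecidableRel G.Adj] (hT : G.IsTree)
    (t : V) (r : Sym2 V → ℝ) (hr : ∀ e ∈ G.edgeSet, 0 < r e)
    (d : V → V → ℝ)
    (hd : ∀ (a b : V) (p : G.Walk a b), p.IsPath → d a b = (p.edges.map r).sum)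
    (L : Matrix V V ℝ)
    (hL : ∀ a b : V, L a b =
      if a = b then ∑ c ∈ G.neighborFinset a, (r s(a, c))⁻¹
      else if G.Adj a b then -(r s(a, b))⁻¹ else 0)
    (H : Matrix {v : V // v ≠ t} {v : V // v ≠ t} ℝ)
    (hH : ∀ a b : {v : V // v ≠ t}, H a b = L a.1 b.1) :
    ∀ a b : {v : V // v ≠ t},
      H⁻¹ a b = (d a.1 t + d b.1 t - d a.1 b.1) / 2 := by
  have hd : G.IsPathDist r d := hd
  have hL : G.IsResistanceLaplacian r L := hL
  have hr : ∀ e ∈ G.edgeSet, r e ≠ 0 := fun e he => (hr e he).ne'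
  have hright : H * Matrix.of (fun a b : {v : V // v ≠ t} => gromovProduct d t a b) = 1 := by
    ext a b
    have hroot : gromovProduct d t t b = 0 := by
      rw [gromovProduct, hd.dist_self, hd.dist_comm (hT.connected b t)]
      ring
    calc ∑ c, H a c * gromovProduct d t c b
        = ∑ c : {v : V // v ≠ t}, L a c * gromovProduct d t c b := by simp only [hH]
      _ = ∑ c, L a c * gromovProduct d t c b := by
        rw [Fintype.sum_eq_add_sum_subtype_ne _ t, hroot, mul_zero, zero_add]
      _ = if a.1 = b.1 then 1 else 0 := hd.sum_laplacian_mul_gromovProduct hL hT hr a.2 b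
      _ = (1 : Matrix _ _ ℝ) a b := by simp [Matrix.one_apply, Subtype.ext_iff]
  intro a b
  rw [Matrix.inv_eq_right_inv hright]
  rfl
end
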